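/- For the two specific 9-taxon binary trees T1 = ((((1,2),3),(4,(5,6))),(7,(8,9))) and T2 = ((((1,4),7),(2,(5,8))),(3,(6,9))), the 3-state character f = ACGACGACG satisfies l_f(T1) = 6 and l_f(T2) = 2, hence d_MP(T1,T2) = 4 = 9 - 2·3 + 1, showing the upper bound n - 2√n + 1 on MP distance is tight. -/

import Mathlib

/-!
An extension of a character that is constant on the components left after cutting some edges
mutates only on those edges. Cutting `T₂` at its clades `{1,4,7}` and `{3,6,9}`, and `T₁` at the
pendant edges of the six taxa in states `C` and `G`, gives `l_f(T₂) ≤ 2` and `l_f(T₁) ≤ 6`.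
Conversely, an extension mutates at least `s - 1` times inside every component, carrying `s`
states, of a tree cut at some edges: this gives `l_f(T₂) ≥ 2`, and `l_f(T₁) ≥ 6` from the
components `{1,2,3}`, `{4,5,6}`, `{7,8,9}` of `T₁` cut at those three clades.

For a character with `k` states whose largest state class has `m` taxa, the same bounds give
`k - 1 ≤ l_f(T) ≤ n - m` on every tree whose taxa are leaves, while `k * m ≥ n`; hence
`|l_f(T₁) - l_f(T₂)| ≤ n + 1 - (k + m) ≤ n - 2√n + 1`, which is `4` for `n = 9`.
-/
/-- A phylogenetic `X`-tree: a finite tree together with an injective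
labelling of the taxa `X` by vertices. -/
structure PhyloTree (X : Type) where
  V : Type
  [fintypeV : Fintype V]
  G : SimpleGraph V
  connected : G.Connected
  acyclic : G.IsAcyclic
  leaf : X ↪ V

namespace PhyloTree

variable {X : Type}

/-- `g` extends the character `f` to all vertices of the tree. -/
def IsExtension {C : Type} (T : PhyloTree X) (f : X → C) (g : T.V → C) : Prop :=
  ∀ x, g (T.leaf x) = f x

/-- The number of edges whose endpoints receive different states under `g`. -/
noncomputable def mutCount {C : Type} (T : PhyloTree X) (g : T.V → C) : ℕ :=
  Set.ncard { e | e ∈ T.G.edgeSet ∧ ∃ u v : T.V, e = s(u, v) ∧ g u ≠ g v }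

/-- The parsimony score `l_f(T)` of a character `f` on the tree `T`. -/
noncomputable def score {C : Type} (T : PhyloTree X) (f : X → C) : ℕ :=
  sInf { n | ∃ g : T.V → C, T.IsExtension f g ∧ T.mutCount g = n }

/-- The Maximum Parsimony distance `d_MP(T₁,T₂) = max_f |l_f(T₁) - l_f(T₂)|`. -/
noncomputable def dMP (T₁ T₂ : PhyloTree X) : ℕ :=
  sSup { n | ∃ f : X → ℕ, n = ((T₁.score f : ℤ) - (T₂.score f : ℤ)).natAbs }

end PhyloTree

/-- An (unrooted) binary phylogenetic `X`-tree: the taxa are exactly the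
degree-1 vertices and every other vertex has degree 3. -/
def PhyloTree.IsBinary {X : Type} (T : PhyloTree X) : Prop :=
  (∀ x, (T.G.neighborSet (T.leaf x)).ncard = 1) ∧
  ∀ v : T.V, v ∉ Set.range T.leaf → (T.G.neighborSet v).ncard = 3

/-- The set of `X`-splits induced by the edges of `T`: for each edge `{u,v}`,
the set of taxa on the `u`-side of the edge (both sides arise, by symmetry). -/
noncomputable def PhyloTree.splits {X : Type} (T : PhyloTree X) : Set (Set X) :=
  { A | ∃ u v : T.V, T.G.Adj u v ∧
      A = { x | (T.G.deleteEdges {s(u, v)}).Reachable (T.leaf x) u } }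

/-- Nontrivial clades of `T₁ = ((((1,2),3),(4,(5,6))),(7,(8,9)))` together with
the trivial splits (taxa `i` are encoded as `i - 1 : Fin 9`). -/
def cladesT1 : Set (Set (Fin 9)) :=
  {{0}, {1}, {2}, {3}, {4}, {5}, {6}, {7}, {8},
   {0, 1}, {0, 1, 2}, {4, 5}, {3, 4, 5}, {7, 8}, {0, 1, 2, 3, 4, 5}}

/-- Nontrivial clades of `T₂ = ((((1,4),7),(2,(5,8))),(3,(6,9)))` together with
the trivial splits. -/
def cladesT2 : Set (Set (Fin 9)) :=
  {{0}, {1}, {2}, {3}, {4}, {5}, {6}, {7}, {8},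
   {0, 3}, {0, 3, 6}, {4, 7}, {1, 4, 7}, {5, 8}, {2, 5, 8}}

/-- The character `ACGACGACG`: taxa `1,4,7 ↦ A`, `2,5,8 ↦ C`, `3,6,9 ↦ G`. -/
def charACG : Fin 9 → ℕ := fun i => (i : ℕ) % 3

namespace SimpleGraph

variable {V α : Type*} {G H : SimpleGraph V}

def mutEdges (G : SimpleGraph V) (g : V → α) : Set (Sym2 V) :=
  { e | e ∈ G.edgeSet ∧ ∃ u v : V, e = s(u, v) ∧ g u ≠ g v }

lemma mutEdges_mono (h : H ≤ G) (g : V → α) : H.mutEdges g ⊆ G.mutEdges g :=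
  fun _ ⟨he, hne⟩ => ⟨edgeSet_mono h he, hne⟩

lemma mutEdges_subset_of_reachable_imp_eq {E : Set (Sym2 V)} {g : V → α}
    (hg : ∀ u v, (G.deleteEdges E).Reachable u v → g u = g v) : G.mutEdges g ⊆ E := by
  rintro _ ⟨hadj, u, v, rfl, hne⟩
  by_contra hE
  exact hne (hg u v (deleteEdges_adj.mpr ⟨hadj, hE⟩).reachable)

lemma Reachable.exists_adj_dist_lt {r v : V} (h : G.Reachable r v) (hne : r ≠ v) :
    ∃ u, G.Adj u v ∧ G.dist r u < G.dist r v := by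
  obtain ⟨p, hp⟩ := h.exists_walk_length_eq_dist
  have hnil : ¬p.Nil := fun hn => hne hn.eq
  refine ⟨p.penultimate, p.adj_penultimate hnil, ?_⟩
  calc G.dist r p.penultimate ≤ p.dropLast.length := dist_le _
    _ < p.length := by rw [← Walk.length_dropLast_add_one hnil]; omega
    _ = G.dist r v := hp

/-- Send each state `c ≠ g r` of the component to the edge entering a vertex of state `c` closest
to `r`; the far endpoint of that edge recovers `c`, so this is injective. -/
lemma ncard_image_reachable_le [Finite V] (g : V → α) (r : V) :
    (g '' {v | G.Reachable r v}).ncard ≤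
      {e ∈ G.mutEdges g | ∀ v ∈ e, G.Reachable r v}.ncard + 1 := by
  set S := g '' {v | G.Reachable r v}
  have key : ∀ c ∈ S \ {g r}, ∃ u v, G.Adj u v ∧ G.Reachable r v ∧ g v = c ∧ g u ≠ c ∧
      G.dist r u < G.dist r v := by
    rintro c ⟨hcS, hcr⟩
    obtain ⟨v, ⟨hv, hvc⟩, hmin⟩ := Set.exists_min_image {v | G.Reachable r v ∧ g v = c}
      (G.dist r) (Set.toFinite _) (by obtain ⟨v, hv, hvc⟩ := hcS; exact ⟨v, hv, hvc⟩)
    obtain ⟨u, huv, hlt⟩ := hv.exists_adj_dist_lt (by rintro rfl; exact hcr hvc.symm)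
    refine ⟨u, v, huv, hv, hvc, fun huc => ?_, hlt⟩
    exact (hmin u ⟨hv.trans huv.symm.reachable, huc⟩).not_gt hlt
  have : Nonempty V := ⟨r⟩
  choose! u v hadj hreach hvc hu hlt using key
  have hmaps : ∀ c ∈ S \ {g r}, s(u c, v c) ∈ {e ∈ G.mutEdges g | ∀ w ∈ e, G.Reachable r w} := by
    intro c hc
    refine ⟨⟨hadj c hc, u c, v c, rfl, by rw [hvc c hc]; exact hu c hc⟩, ?_⟩
    simp only [Sym2.mem_iff, forall_eq_or_imp, forall_eq]
    exact ⟨(hreach c hc).trans (hadj c hc).symm.reachable, hreach c hc⟩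
  have hinj : Set.InjOn (fun c => s(u c, v c)) (S \ {g r}) := by
    intro c hc c' hc' h
    rcases Sym2.eq_iff.mp h with ⟨-, h⟩ | ⟨h₁, h₂⟩
    · rw [← hvc c hc, ← hvc c' hc', h]
    · have h := hlt c hc
      rw [h₁, h₂] at h
      exact absurd (hlt c' hc') h.asymm
  have hdiff := Set.ncard_le_ncard_of_injOn _ hmaps hinj
  rw [← Set.ncard_sdiff_singleton_add_one (Set.mem_image_of_mem g (Reachable.refl r))]
  exact Nat.add_le_add_right hdiff 1

lemma sum_ncard_image_reachable_le [Finite V] (g : V → α) (R : Finset V)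
    (hR : (R : Set V).Pairwise fun r s => ¬G.Reachable r s) :
    ∑ r ∈ R, (g '' {v | G.Reachable r v}).ncard ≤ (G.mutEdges g).ncard + R.card := by
  set M : V → Set (Sym2 V) := fun r => {e ∈ G.mutEdges g | ∀ v ∈ e, G.Reachable r v}
  have hdisj : (R : Set V).PairwiseDisjoint M := by
    intro r hr s hs hrs
    refine Set.disjoint_left.mpr fun e her hes => ?_
    induction e with
    | h a b => exact hR hr hs hrs ((her.2 a (Sym2.mem_mk_left a b)).trans
        (hes.2 a (Sym2.mem_mk_left a b)).symm)
  have hunion : ∑ r ∈ R, (M r).ncard ≤ (G.mutEdges g).ncard := by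
    rw [← finsum_mem_coe_finset, ← R.finite_toSet.ncard_biUnion (fun _ _ => Set.toFinite _) hdisj]
    exact Set.ncard_le_ncard (Set.iUnion₂_subset fun r _ => Set.sep_subset _ _) (Set.toFinite _)
  calc ∑ r ∈ R, (g '' {v | G.Reachable r v}).ncard ≤ ∑ r ∈ R, ((M r).ncard + 1) :=
        Finset.sum_le_sum fun r _ => ncard_image_reachable_le g r
    _ ≤ (G.mutEdges g).ncard + R.card := by
      rw [Finset.sum_add_distrib, Finset.sum_const, smul_eq_mul, mul_one]; omega

lemma Reachable.deleteEdges_or {x u v : V} (h : G.Reachable x u) :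
    (G.deleteEdges {s(u, v)}).Reachable x u ∨ (G.deleteEdges {s(u, v)}).Reachable x v := by
  obtain ⟨p⟩ := h
  induction p with
  | nil => exact .inl .rfl
  | @cons x z u hxz p ih =>
    by_cases he : s(x, z) = s(u, v)
    · rcases Sym2.eq_iff.mp he with ⟨rfl, rfl⟩ | ⟨rfl, rfl⟩
      · exact .inl .rfl
      · exact .inr .rfl
    · have hadj : (G.deleteEdges {s(u, v)}).Adj x z := deleteEdges_adj.mpr ⟨hxz, he⟩
      exact ih.imp hadj.reachable.trans hadj.reachable.trans

lemma Connected.reachable_deleteEdges_iff (hG : G.Connected) {u v x y : V} :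
    (G.deleteEdges {s(u, v)}).Reachable x y ↔
      ((G.deleteEdges {s(u, v)}).Reachable x u ↔ (G.deleteEdges {s(u, v)}).Reachable y u) := by
  refine ⟨fun h => ⟨h.symm.trans, h.trans⟩, fun h => ?_⟩
  by_cases hxu : (G.deleteEdges {s(u, v)}).Reachable x u
  · exact hxu.trans (h.mp hxu).symm
  · have hyu := mt h.mpr hxu
    exact (((hG x u).deleteEdges_or).resolve_left hxu).trans
      (((hG y u).deleteEdges_or).resolve_left hyu).symm

/-- In a forest the path from `x` to `y` is unique, so if it survives the removal of each edge
of `s` separately, it avoids all of `s`. -/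
lemma IsAcyclic.reachable_deleteEdges_of_forall (hG : G.IsAcyclic) {s : Set (Sym2 V)} {x y : V}
    (h : G.Reachable x y) (hs : ∀ e ∈ s, (G.deleteEdges {e}).Reachable x y) :
    (G.deleteEdges s).Reachable x y := by
  classical
  obtain ⟨p⟩ := h
  refine ⟨p.toPath.val.toDeleteEdges s fun e hep hes => ?_⟩
  have he := hs e hes
  induction e with
  | h a b =>
    obtain ⟨q, hq⟩ := reachable_deleteEdges_iff_exists_walk.mp he
    have := hG.subsingleton_path x y
    rw [Subsingleton.elim p.toPath q.toPath] at hep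
    exact hq (q.edges_toPath_subset_edges hep)

end SimpleGraph

lemma exists_card_le_ncard_range_mul_ncard_fiber {X C : Type} [Finite X] [Nonempty C]
    (f : X → C) : ∃ c, Nat.card X ≤ (Set.range f).ncard * {x | f x = c}.ncard := by
  classical
  rcases isEmpty_or_nonempty X with hX | hX
  · exact ⟨Classical.arbitrary C, by simp⟩
  have := Fintype.ofFinite X
  obtain ⟨c, -, hc⟩ := Finset.exists_max_image (Finset.univ.image f)
    (fun c => (Finset.univ.filter (f · = c)).card) (Finset.univ_nonempty.image f)
  refine ⟨c, ?_⟩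
  have hrange : (Set.range f).ncard = (Finset.univ.image f).card := by
    rw [← Set.ncard_coe_finset, Finset.coe_image, Finset.coe_univ, Set.image_univ]
  have hfiber : {x | f x = c}.ncard = (Finset.univ.filter (f · = c)).card := by
    rw [← Set.ncard_coe_finset, Finset.coe_filter]
    simp
  rw [Nat.card_eq_fintype_card, ← Finset.card_univ, Finset.card_eq_sum_card_image f Finset.univ,
    hrange, hfiber]
  exact Finset.sum_le_card_nsmul _ _ _ hc

namespace PhyloTree

open SimpleGraph

variable {X C : Type} (T : PhyloTree X)

attribute [local instance] PhyloTree.fintypeV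

lemma mutCount_eq_ncard_mutEdges (g : T.V → C) : T.mutCount g = (T.G.mutEdges g).ncard := rfl

lemma score_le_mutCount {f : X → C} {g : T.V → C} (hg : T.IsExtension f g) :
    T.score f ≤ T.mutCount g :=
  Nat.sInf_le ⟨g, hg, rfl⟩

lemma exists_isExtension_mutCount_eq_score [Nonempty C] (f : X → C) :
    ∃ g, T.IsExtension f g ∧ T.mutCount g = T.score f :=
  Nat.sInf_mem (s := {n | ∃ g, T.IsExtension f g ∧ T.mutCount g = n})
    ⟨_, Function.extend T.leaf f (Classical.arbitrary _), T.leaf.injective.extend_apply f _, rfl⟩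

lemma exists_edge_of_mem_splits {A : Set X} (hA : A ∈ T.splits) :
    ∃ e, ∀ x y, (T.G.deleteEdges {e}).Reachable (T.leaf x) (T.leaf y) ↔ (x ∈ A ↔ y ∈ A) := by
  obtain ⟨u, v, -, rfl⟩ := hA
  exact ⟨s(u, v), fun x y => T.connected.reachable_deleteEdges_iff⟩

lemma exists_edges_of_subset_splits (S : Finset (Set X)) (hS : ↑S ⊆ T.splits) :
    ∃ E : Set (Sym2 T.V), E.ncard ≤ S.card ∧ ∀ x y,
      (T.G.deleteEdges E).Reachable (T.leaf x) (T.leaf y) ↔ ∀ A ∈ S, (x ∈ A ↔ y ∈ A) := by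
  obtain ⟨v⟩ := T.connected.nonempty
  have : Nonempty (Sym2 T.V) := ⟨s(v, v)⟩
  choose! e he using fun A (hA : A ∈ S) => T.exists_edge_of_mem_splits (hS hA)
  refine ⟨e '' S, (Set.ncard_image_le S.finite_toSet).trans (Set.ncard_coe_finset S).le,
    fun x y => ⟨fun h A hA => (he A hA x y).mp ?_, fun h => ?_⟩⟩
  · exact h.mono (deleteEdges_anti (Set.singleton_subset_iff.mpr (Set.mem_image_of_mem e hA)))
  · refine T.acyclic.reachable_deleteEdges_of_forall (T.connected _ _) ?_
    rintro _ ⟨A, hA, rfl⟩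
    exact (he A hA x y).mpr (h A hA)

/-- An extension constant on the components of `T - E` can only mutate along `E`. -/
lemma score_le_ncard_of_reachable_imp_eq [Nonempty C] (f : X → C) (E : Set (Sym2 T.V))
    (hf : ∀ x y, (T.G.deleteEdges E).Reachable (T.leaf x) (T.leaf y) → f x = f y) :
    T.score f ≤ E.ncard := by
  classical
  set H := T.G.deleteEdges E
  let g : T.V → C := fun v =>
    if h : ∃ x, H.Reachable (T.leaf x) v then f h.choose else Classical.arbitrary C
  have hg : ∀ x v, H.Reachable (T.leaf x) v → g v = f x := by
    intro x v hxv
    have h : ∃ x, H.Reachable (T.leaf x) v := ⟨x, hxv⟩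
    simp only [g, dif_pos h]
    exact hf _ _ (h.choose_spec.trans hxv.symm)
  refine (T.score_le_mutCount fun x => hg x _ .rfl).trans ?_
  rw [mutCount_eq_ncard_mutEdges]
  refine Set.ncard_le_ncard (T.G.mutEdges_subset_of_reachable_imp_eq fun u v huv => ?_)
    (Set.toFinite _)
  by_cases hu : ∃ x, H.Reachable (T.leaf x) u
  · obtain ⟨x, hx⟩ := hu
    rw [hg x u hx, hg x v (hx.trans huv)]
  · have hv : ¬∃ x, H.Reachable (T.leaf x) v := fun ⟨x, hx⟩ => hu ⟨x, hx.trans huv.symm⟩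
    simp only [g, dif_neg hu, dif_neg hv]

lemma score_le_card_of_subset_splits [Nonempty C] (f : X → C) (S : Finset (Set X))
    (hS : ↑S ⊆ T.splits) (hf : ∀ x y, (∀ A ∈ S, (x ∈ A ↔ y ∈ A)) → f x = f y) :
    T.score f ≤ S.card := by
  obtain ⟨E, hE, hreach⟩ := T.exists_edges_of_subset_splits S hS
  exact (T.score_le_ncard_of_reachable_imp_eq f E fun x y h => hf x y ((hreach x y).mp h)).trans hE

/-- Majority-state upper bound: cut the pendant edges of the taxa whose state is not `c`. -/
lemma score_add_ncard_fiber_le [Finite X] [Nonempty C]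
    (hleaf : ∀ x, (T.G.neighborSet (T.leaf x)).ncard = 1) (f : X → C) (c : C) :
    T.score f + {x | f x = c}.ncard ≤ Nat.card X := by
  have hcompl := Set.ncard_add_ncard_compl {x | f x = c}
  choose w hw using fun x => Set.ncard_eq_one.mp (hleaf x)
  set B := {x | f x = c}ᶜ
  set E := (fun x => s(T.leaf x, w x)) '' B
  have hisolated : ∀ x ∈ B, ∀ v, (T.G.deleteEdges E).Reachable (T.leaf x) v → T.leaf x = v := by
    rintro x hx v ⟨_ | ⟨h, -⟩⟩
    · rfl
    · obtain ⟨hadj, hnot⟩ := deleteEdges_adj.mp h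
      have hw' : _ ∈ T.G.neighborSet (T.leaf x) := hadj
      rw [hw x, Set.mem_singleton_iff] at hw'
      exact absurd ⟨x, hx, by rw [hw']⟩ hnot
  have hscore : T.score f ≤ E.ncard := by
    refine T.score_le_ncard_of_reachable_imp_eq f E fun x y hxy => ?_
    by_cases hx : f x = c
    · by_cases hy : f y = c
      · rw [hx, hy]
      · rw [T.leaf.injective (hisolated y hy _ hxy.symm)]
    · rw [T.leaf.injective (hisolated x hx _ hxy)]
  have hE : E.ncard ≤ B.ncard := Set.ncard_image_le (Set.toFinite B)
  omega

lemma sum_ncard_image_le_score_add_card [Nonempty C] (f : X → C) (E : Set (Sym2 T.V))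
    (R : Finset X)
    (hR : (R : Set X).Pairwise fun x y => ¬(T.G.deleteEdges E).Reachable (T.leaf x) (T.leaf y)) :
    ∑ x ∈ R, (f '' {y | (T.G.deleteEdges E).Reachable (T.leaf x) (T.leaf y)}).ncard ≤
      T.score f + R.card := by
  obtain ⟨g, hg, hcount⟩ := T.exists_isExtension_mutCount_eq_score f
  set H := T.G.deleteEdges E
  have hR' : ((R.map T.leaf : Finset T.V) : Set T.V).Pairwise fun r s => ¬H.Reachable r s := by
    rwa [Finset.coe_map, T.leaf.injective.injOn.pairwise_image]
  calc ∑ x ∈ R, (f '' {y | H.Reachable (T.leaf x) (T.leaf y)}).ncard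
      ≤ ∑ x ∈ R, (g '' {v | H.Reachable (T.leaf x) v}).ncard := by
        refine Finset.sum_le_sum fun x _ => Set.ncard_le_ncard ?_ (Set.toFinite _)
        rintro _ ⟨y, hy, rfl⟩
        exact ⟨_, hy, hg y⟩
    _ = ∑ r ∈ R.map T.leaf, (g '' {v | H.Reachable r v}).ncard := by rw [Finset.sum_map]
    _ ≤ (H.mutEdges g).ncard + (R.map T.leaf).card := H.sum_ncard_image_reachable_le g _ hR'
    _ ≤ T.score f + R.card := by
        rw [Finset.card_map, ← hcount, mutCount_eq_ncard_mutEdges]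
        exact Nat.add_le_add_right
          (Set.ncard_le_ncard (mutEdges_mono (deleteEdges_le _) g) (Set.toFinite _)) _

lemma sum_ncard_image_le_score_add_card_of_subset_splits [Nonempty C] (f : X → C)
    (S : Finset (Set X)) (hS : ↑S ⊆ T.splits) (R : Finset X)
    (hR : (R : Set X).Pairwise fun x y => ¬∀ A ∈ S, (x ∈ A ↔ y ∈ A)) :
    ∑ x ∈ R, (f '' {y | ∀ A ∈ S, (x ∈ A ↔ y ∈ A)}).ncard ≤ T.score f + R.card := by
  obtain ⟨E, -, hreach⟩ := T.exists_edges_of_subset_splits S hS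
  simp only [← hreach] at hR ⊢
  exact T.sum_ncard_image_le_score_add_card f E R hR

lemma ncard_range_le_score_add_one [Nonempty C] (f : X → C) :
    (Set.range f).ncard ≤ T.score f + 1 := by
  rcases isEmpty_or_nonempty X with hX | ⟨⟨x⟩⟩
  · simp [Set.range_eq_empty]
  · simpa [← Set.image_univ] using
      T.sum_ncard_image_le_score_add_card_of_subset_splits f ∅ (by simp) {x} (by simp)

theorem natAbs_score_sub_score_le [Finite X] [Nonempty C] {T₁ T₂ : PhyloTree X}
    (h₁ : ∀ x, (T₁.G.neighborSet (T₁.leaf x)).ncard = 1)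
    (h₂ : ∀ x, (T₂.G.neighborSet (T₂.leaf x)).ncard = 1) (f : X → C) :
    ((((T₁.score f : ℤ) - T₂.score f).natAbs : ℕ) : ℝ) ≤
      Nat.card X - 2 * √(Nat.card X) + 1 := by
  obtain ⟨c, hkm⟩ := exists_card_le_ncard_range_mul_ncard_fiber f
  set k := (Set.range f).ncard
  set m := {x | f x = c}.ncard
  have hk₁ := T₁.ncard_range_le_score_add_one f
  have hk₂ := T₂.ncard_range_le_score_add_one f
  have hm₁ := T₁.score_add_ncard_fiber_le h₁ f c
  have hm₂ := T₂.score_add_ncard_fiber_le h₂ f c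
  have hdiff : (((T₁.score f : ℤ) - T₂.score f).natAbs : ℤ) + k + m ≤ Nat.card X + 1 := by omega
  have hsqrt : 2 * √(Nat.card X) ≤ k + m := by
    have hkm' : (Nat.card X : ℝ) ≤ k * m := by exact_mod_cast hkm
    have : √(Nat.card X) ≤ (k + m) / 2 :=
      Real.sqrt_le_iff.mpr ⟨by positivity, by nlinarith [sq_nonneg ((k : ℝ) - m)]⟩
    linarith
  have hdiff' : (((T₁.score f : ℤ) - T₂.score f).natAbs : ℝ) + k + m ≤ Nat.card X + 1 := by
    exact_mod_cast hdiff
  linarith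

lemma dMP_eq_of_forall_le {T₁ T₂ : PhyloTree X} {d : ℕ}
    (hle : ∀ f : X → ℕ, ((T₁.score f : ℤ) - T₂.score f).natAbs ≤ d) (f : X → ℕ)
    (hf : ((T₁.score f : ℤ) - T₂.score f).natAbs = d) : dMP T₁ T₂ = d := by
  have hbdd : ∀ n ∈ {n | ∃ f : X → ℕ, n = ((T₁.score f : ℤ) - T₂.score f).natAbs}, n ≤ d := by
    rintro _ ⟨f, rfl⟩
    exact hle f
  exact le_antisymm (csSup_le ⟨d, f, hf.symm⟩ hbdd) (le_csSup ⟨d, hbdd⟩ ⟨f, hf.symm⟩)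

end PhyloTree

lemma two_lt_ncard_image_charACG {s : Set (Fin 9)} {a b c : Fin 9} (ha : a ∈ s) (hb : b ∈ s)
    (hc : c ∈ s) (hab : charACG a ≠ charACG b) (hac : charACG a ≠ charACG c)
    (hbc : charACG b ≠ charACG c) : 2 < (charACG '' s).ncard :=
  (Set.two_lt_ncard_iff (Set.toFinite _)).mpr ⟨_, _, _, ⟨a, ha, rfl⟩, ⟨b, hb, rfl⟩, ⟨c, hc, rfl⟩,
    hab, hac, hbc⟩

lemma score_charACG_le_six (T : PhyloTree (Fin 9)) (hs : cladesT1 ⊆ T.splits) :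
    T.score charACG ≤ 6 := by
  classical
  refine (T.score_le_card_of_subset_splits charACG {{1}, {2}, {4}, {5}, {7}, {8}}
    ?_ ?_).trans Finset.card_le_six
  · intro A hA
    simp only [Finset.coe_insert, Finset.coe_singleton, Set.mem_insert_iff,
      Set.mem_singleton_iff] at hA
    rcases hA with rfl | rfl | rfl | rfl | rfl | rfl <;> exact hs (by simp [cladesT1])
  · simp only [Finset.mem_insert, Finset.mem_singleton, forall_eq_or_imp, forall_eq,
      Set.mem_singleton_iff]
    decide

lemma six_le_score_charACG (T : PhyloTree (Fin 9))
    (hs : cladesT1 ∪ (fun A => Aᶜ) '' cladesT1 ⊆ T.splits) : 6 ≤ T.score charACG := by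
  classical
  set S : Finset (Set (Fin 9)) := {{0, 1, 2}, {3, 4, 5}, {6, 7, 8}}
  have hS : ↑S ⊆ T.splits := by
    intro A hA
    simp only [S, Finset.coe_insert, Finset.coe_singleton, Set.mem_insert_iff,
      Set.mem_singleton_iff] at hA
    rcases hA with rfl | rfl | rfl
    · exact hs (.inl (by simp [cladesT1]))
    · exact hs (.inl (by simp [cladesT1]))
    · refine hs (.inr ⟨{0, 1, 2, 3, 4, 5}, by simp [cladesT1], ?_⟩)
      ext x
      fin_cases x <;> simp
  have hblock : ∀ x y : Fin 9, (∀ A ∈ S, (x ∈ A ↔ y ∈ A)) ↔ x.val / 3 = y.val / 3 := by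
    simp only [S, Finset.mem_insert, Finset.mem_singleton, forall_eq_or_imp, forall_eq,
      Set.mem_insert_iff, Set.mem_singleton_iff]
    decide
  have hsum := T.sum_ncard_image_le_score_add_card_of_subset_splits charACG S hS {0, 3, 6} (by
    intro x hx y hy hxy
    simp only [Finset.coe_insert, Finset.coe_singleton, Set.mem_insert_iff,
      Set.mem_singleton_iff] at hx hy
    rcases hx with rfl | rfl | rfl <;> rcases hy with rfl | rfl | rfl <;> simp_all)
  simp only [hblock] at hsum
  have hthree : ∀ x ∈ ({0, 3, 6} : Finset (Fin 9)),
      3 ≤ (charACG '' {y | x.val / 3 = y.val / 3}).ncard := by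
    intro x hx
    simp only [Finset.mem_insert, Finset.mem_singleton] at hx
    rcases hx with rfl | rfl | rfl
    · exact two_lt_ncard_image_charACG (a := 0) (b := 1) (c := 2) rfl rfl rfl
        (by decide) (by decide) (by decide)
    · exact two_lt_ncard_image_charACG (a := 3) (b := 4) (c := 5) rfl rfl rfl
        (by decide) (by decide) (by decide)
    · exact two_lt_ncard_image_charACG (a := 6) (b := 7) (c := 8) rfl rfl rfl
        (by decide) (by decide) (by decide)
  have := Finset.card_nsmul_le_sum _ _ _ hthree
  have hcard : ({0, 3, 6} : Finset (Fin 9)).card = 3 := rfl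
  rw [smul_eq_mul] at this
  omega

lemma score_charACG_eq_two (T : PhyloTree (Fin 9)) (hs : cladesT2 ⊆ T.splits) :
    T.score charACG = 2 := by
  classical
  have hle : T.score charACG ≤ 2 := by
    refine (T.score_le_card_of_subset_splits charACG {{0, 3, 6}, {2, 5, 8}} ?_ ?_).trans
      Finset.card_le_two
    · intro A hA
      simp only [Finset.coe_insert, Finset.coe_singleton, Set.mem_insert_iff,
        Set.mem_singleton_iff] at hA
      rcases hA with rfl | rfl <;> exact hs (by simp [cladesT2])
    · simp only [Finset.mem_insert, Finset.mem_singleton, forall_eq_or_imp, forall_eq,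
        Set.mem_insert_iff, Set.mem_singleton_iff]
      decide
  have hge : 2 < (Set.range charACG).ncard := by
    rw [← Set.image_univ]
    exact two_lt_ncard_image_charACG (a := 0) (b := 1) (c := 2) trivial trivial trivial
      (by decide) (by decide) (by decide)
  have := T.ncard_range_le_score_add_one charACG
  omega

/-- On the specific trees `T₁ = ((((1,2),3),(4,(5,6))),(7,(8,9)))` and
`T₂ = ((((1,4),7),(2,(5,8))),(3,(6,9)))`, the character `ACGACGACG` has
scores 6 and 2, and `d_MP(T₁,T₂) = 4 = 9 - 2·3 + 1`: the bound is tight. -/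
theorem tight_example (T₁ T₂ : PhyloTree (Fin 9))
    (hb₁ : T₁.IsBinary) (hb₂ : T₂.IsBinary)
    (hs₁ : T₁.splits = cladesT1 ∪ ((fun A => Aᶜ) '' cladesT1))
    (hs₂ : T₂.splits = cladesT2 ∪ ((fun A => Aᶜ) '' cladesT2)) :
    T₁.score charACG = 6 ∧ T₂.score charACG = 2 ∧
    PhyloTree.dMP T₁ T₂ = 4 ∧ (4 : ℕ) = 9 - 2 * 3 + 1 := by
  have h₁ : T₁.score charACG = 6 :=
    le_antisymm (score_charACG_le_six T₁ (hs₁ ▸ Set.subset_union_left))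
      (six_le_score_charACG T₁ hs₁.ge)
  have h₂ : T₂.score charACG = 2 := score_charACG_eq_two T₂ (hs₂ ▸ Set.subset_union_left)
  refine ⟨h₁, h₂, PhyloTree.dMP_eq_of_forall_le (fun f => ?_) charACG (by rw [h₁, h₂]; rfl), rfl⟩
  have hbound := PhyloTree.natAbs_score_sub_score_le hb₁.1 hb₂.1 f
  have hsqrt : √(9 : ℝ) = 3 := by
    rw [show (9 : ℝ) = 3 ^ 2 by norm_num, Real.sqrt_sq (by norm_num)]
  rw [Nat.card_fin, Nat.cast_ofNat, hsqrt] at hbound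
  exact_mod_cast (by linarith : ((((T₁.score f : ℤ) - T₂.score f).natAbs : ℕ) : ℝ) ≤ 4)
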